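/- For integers p, q with p + q even, the integral F(p,q) = (1/(4π²)) ∫_{−π}^{π} ∫_{−π}^{π} (1 − cos(x·p + y·q)) / (6 − 4·cos x·cos y − 2·cos 2y) dx dy converges, F(0,0) = 0, and F satisfies the discrete Poisson equation on the triangular lattice with a unit point source at the origin: for every (p,q) with p + q even, F(p+1,q+1) + F(p+1,q−1) + F(p−1,q+1) + F(p−1,q−1) + F(p,q+2) + F(p,q−2) − 6·F(p,q) = 1 if (p,q) = (0,0) and 0 otherwise. -/

import Mathlib

open MeasureTheory

/-- The Fourier-integral Green's function of the triangular lattice (realized as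
integer pairs `(p,q)` with `p + q` even), normalized to vanish at the origin. -/
noncomputable def triangularGreen (p q : ℤ) : ℝ :=
  (1 / (4 * Real.pi ^ 2)) *
    ∫ x in (-Real.pi)..Real.pi, ∫ y in (-Real.pi)..Real.pi,
      (1 - Real.cos (x * (p : ℝ) + y * (q : ℝ))) /
        (6 - 4 * Real.cos x * Real.cos y - 2 * Real.cos (2 * y))

/-!
The symbol `D(x,y) = 6 - 4 cos x cos y - 2 cos 2y` equals
`2(1 - cos(x+y)) + 2(1 - cos(x-y)) + 2(1 - cos 2y)`.
When `p + q` is even, write `q = p + 2r`, so that `xp + yq = p(x+y) + r(2y)`; the inequalities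
`1 - cos(a+b) ≤ 2(1 - cos a) + 2(1 - cos b)` and `1 - cos(ma) ≤ m²(1 - cos a)` then bound the
numerator by `(p² + r²) D`, so the integrand is bounded and hence integrable.
The lattice Laplacian of the numerator `1 - cos(xp + yq)` is `cos(xp + yq) D`, so off the null set
`{D = 0}` the Laplacian of the integrand is the Fourier mode `cos(xp + yq)`, whose integral over
the torus is `4π²` at the origin and `0` elsewhere.
-/

open Real

namespace Real

lemma abs_sin_add_le (a b : ℝ) : |sin (a + b)| ≤ |sin a| + |sin b| := by
  rw [sin_add]
  calc |sin a * cos b + cos a * sin b| ≤ |sin a| * |cos b| + |cos a| * |sin b| := by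
        simpa only [abs_mul] using abs_add_le (sin a * cos b) (cos a * sin b)
    _ ≤ |sin a| * 1 + 1 * |sin b| := by gcongr <;> exact abs_cos_le_one _
    _ = |sin a| + |sin b| := by ring

lemma abs_sin_nat_mul_le (n : ℕ) (a : ℝ) : |sin (n * a)| ≤ n * |sin a| := by
  induction n with
  | zero => simp
  | succ n ih =>
    calc |sin ((n + 1 : ℕ) * a)| = |sin (n * a + a)| := by push_cast; ring_nf
      _ ≤ |sin (n * a)| + |sin a| := abs_sin_add_le _ _
      _ ≤ (n + 1 : ℕ) * |sin a| := by push_cast; linarith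

lemma abs_sin_int_mul_le (m : ℤ) (a : ℝ) : |sin (m * a)| ≤ |(m : ℝ)| * |sin a| := by
  obtain ⟨n, rfl | rfl⟩ := Int.eq_nat_or_neg m
  · simpa using abs_sin_nat_mul_le n a
  · simpa [neg_mul, sin_neg] using abs_sin_nat_mul_le n a

lemma one_sub_cos_eq_two_mul_sin_sq (a : ℝ) : 1 - cos a = 2 * sin (a / 2) ^ 2 := by
  rw [sin_sq_eq_half_sub, mul_div_cancel₀ a two_ne_zero]
  ring

lemma one_sub_cos_add_le (a b : ℝ) :
    1 - cos (a + b) ≤ 2 * (1 - cos a) + 2 * (1 - cos b) := by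
  simp only [one_sub_cos_eq_two_mul_sin_sq, add_div]
  have h := pow_le_pow_left₀ (abs_nonneg _) (abs_sin_add_le (a / 2) (b / 2)) 2
  rw [sq_abs] at h
  nlinarith [sq_nonneg (|sin (a / 2)| - |sin (b / 2)|), sq_abs (sin (a / 2)), sq_abs (sin (b / 2))]

lemma one_sub_cos_int_mul_le (m : ℤ) (a : ℝ) :
    1 - cos (m * a) ≤ (m : ℝ) ^ 2 * (1 - cos a) := by
  simp only [one_sub_cos_eq_two_mul_sin_sq, mul_div_assoc]
  have h := pow_le_pow_left₀ (abs_nonneg _) (abs_sin_int_mul_le m (a / 2)) 2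
  rw [sq_abs, mul_pow, sq_abs, sq_abs] at h
  linarith

lemma integral_cos_add_mul_int (c : ℝ) (m : ℤ) :
    ∫ y in -π..π, cos (c + y * m) = if m = 0 then 2 * π * cos c else 0 := by
  split_ifs with hm
  · subst hm
    simp only [Int.cast_zero, mul_zero, add_zero, intervalIntegral.integral_const, smul_eq_mul]
    ring
  · have hm' : (m : ℝ) ≠ 0 := by exact_mod_cast hm
    simp only [mul_comm _ (m : ℝ), add_comm c]
    rw [intervalIntegral.integral_comp_mul_add cos hm' c, integral_cos,
      show (m : ℝ) * π + c = (m * -π + c) + m * (2 * π) by ring, sin_periodic.int_mul m]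
    simp

lemma integral_integral_cos_mul_int (p q : ℤ) :
    ∫ x in -π..π, ∫ y in -π..π, cos (x * p + y * q) =
      if p = 0 ∧ q = 0 then 4 * π ^ 2 else 0 := by
  simp only [integral_cos_add_mul_int]
  by_cases hq : q = 0
  · have hp := integral_cos_add_mul_int 0 p
    simp only [zero_add] at hp
    simp only [hq, if_true, and_true, intervalIntegral.integral_const_mul, hp]
    split_ifs
    · rw [cos_zero]; ring
    · simp
  · simp [hq]

end Real

lemma MeasureTheory.StronglyMeasurable.intervalIntegral_prod_right {α E : Type*}
    [MeasurableSpace α] [NormedAddCommGroup E] [NormedSpace ℝ E] {μ : Measure ℝ} [SFinite μ]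
    {f : α × ℝ → E}
    (hf : StronglyMeasurable f) (a b : ℝ) :
    StronglyMeasurable fun x => ∫ y in a..b, f (x, y) ∂μ :=
  hf.integral_prod_right'.sub hf.integral_prod_right'

-- `6 - Σ cos(x dp + y dq)` over the six neighbour offsets `(dp, dq)`: the symbol of minus the
-- lattice Laplacian.
noncomputable def triangularSymbol (x y : ℝ) : ℝ :=
  6 - 4 * cos x * cos y - 2 * cos (2 * y)

lemma triangularSymbol_eq (x y : ℝ) :
    triangularSymbol x y =
      2 * (1 - cos (x + y)) + 2 * (1 - cos (x - y)) + 2 * (1 - cos (2 * y)) := by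
  simp only [triangularSymbol, cos_add, cos_sub]
  ring

lemma triangularSymbol_nonneg (x y : ℝ) : 0 ≤ triangularSymbol x y := by
  rw [triangularSymbol_eq]
  linarith [cos_le_one (x + y), cos_le_one (x - y), cos_le_one (2 * y)]

lemma ae_triangularSymbol_ne_zero (x : ℝ) : ∀ᵐ y, triangularSymbol x y ≠ 0 := by
  have hcount : {y : ℝ | cos (2 * y) = 1}.Countable := by
    refine (Set.countable_range fun n : ℤ => n * π).mono fun y hy => ?_
    obtain ⟨n, hn⟩ := (cos_eq_one_iff _).1 hy
    exact ⟨n, by linarith⟩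
  filter_upwards [hcount.ae_notMem volume] with y hy
  have hcos : cos (2 * y) < 1 := (cos_le_one _).lt_of_ne hy
  rw [triangularSymbol_eq]
  linarith [cos_le_one (x + y), cos_le_one (x - y)]

lemma one_sub_cos_le_mul_triangularSymbol (p r : ℤ) (x y : ℝ) :
    1 - cos (x * p + y * ((p + 2 * r : ℤ) : ℝ)) ≤
      ((p : ℝ) ^ 2 + (r : ℝ) ^ 2) * triangularSymbol x y := by
  have hsplit : x * p + y * ((p + 2 * r : ℤ) : ℝ) = p * (x + y) + r * (2 * y) := by
    push_cast; ring
  have hD := triangularSymbol_eq x y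
  have hxy : (p : ℝ) ^ 2 * (2 * (1 - cos (x + y))) ≤ (p : ℝ) ^ 2 * triangularSymbol x y :=
    mul_le_mul_of_nonneg_left (by linarith [cos_le_one (x - y), cos_le_one (2 * y)])
      (sq_nonneg _)
  have hyy : (r : ℝ) ^ 2 * (2 * (1 - cos (2 * y))) ≤ (r : ℝ) ^ 2 * triangularSymbol x y :=
    mul_le_mul_of_nonneg_left (by linarith [cos_le_one (x - y), cos_le_one (x + y)])
      (sq_nonneg _)
  rw [hsplit]
  linarith [one_sub_cos_add_le (p * (x + y)) (r * (2 * y)),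
    one_sub_cos_int_mul_le p (x + y), one_sub_cos_int_mul_le r (2 * y)]

noncomputable def triangularIntegrand (p q : ℤ) (x y : ℝ) : ℝ :=
  (1 - cos (x * p + y * q)) / triangularSymbol x y

lemma measurable_triangularIntegrand (p q : ℤ) :
    Measurable (Function.uncurry (triangularIntegrand p q)) := by
  unfold triangularIntegrand triangularSymbol Function.uncurry
  fun_prop

lemma exists_norm_triangularIntegrand_le {p q : ℤ} (h : Even (p + q)) :
    ∃ C, ∀ x y, ‖triangularIntegrand p q x y‖ ≤ C := by
  obtain ⟨r, rfl⟩ : ∃ r, q = p + 2 * r := by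
    obtain ⟨k, hk⟩ := h
    exact ⟨k - p, by omega⟩
  refine ⟨(p : ℝ) ^ 2 + (r : ℝ) ^ 2, fun x y => ?_⟩
  rw [triangularIntegrand, Real.norm_of_nonneg
    (div_nonneg (sub_nonneg.2 (cos_le_one _)) (triangularSymbol_nonneg x y))]
  exact div_le_of_le_mul₀ (triangularSymbol_nonneg x y) (by positivity)
    (one_sub_cos_le_mul_triangularSymbol p r x y)

lemma integrableOn_triangularIntegrand {p q : ℤ} (h : Even (p + q)) {s : Set (ℝ × ℝ)}
    (hs : volume s ≠ ⊤) :
    IntegrableOn (Function.uncurry (triangularIntegrand p q)) s := by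
  obtain ⟨C, hC⟩ := exists_norm_triangularIntegrand_le h
  exact Measure.integrableOn_of_bounded hs
    (measurable_triangularIntegrand p q).aestronglyMeasurable (M := C)
    (ae_of_all _ fun z => hC z.1 z.2)

lemma intervalIntegrable_triangularIntegrand {p q : ℤ} (h : Even (p + q)) (x a b : ℝ) :
    IntervalIntegrable (triangularIntegrand p q x) volume a b := by
  obtain ⟨C, hC⟩ := exists_norm_triangularIntegrand_le h
  exact (intervalIntegrable_const (c := C)).mono_fun'
    ((measurable_triangularIntegrand p q).comp measurable_prodMk_left).aestronglyMeasurable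
    (ae_of_all _ (hC x))

lemma intervalIntegrable_intervalIntegral_triangularIntegrand {p q : ℤ} (h : Even (p + q))
    (a b c d : ℝ) :
    IntervalIntegrable (fun x => ∫ y in c..d, triangularIntegrand p q x y) volume a b := by
  obtain ⟨C, hC⟩ := exists_norm_triangularIntegrand_le h
  exact (intervalIntegrable_const (c := C * |d - c|)).mono_fun'
    ((measurable_triangularIntegrand p q).stronglyMeasurable.intervalIntegral_prod_right
      c d).aestronglyMeasurable
    (ae_of_all _ fun x => intervalIntegral.norm_integral_le_of_norm_le_const fun y _ => hC x y)

def triangularLaplacian (F : ℤ → ℤ → ℝ) (p q : ℤ) : ℝ :=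
  F (p + 1) (q + 1) + F (p + 1) (q - 1) + F (p - 1) (q + 1) + F (p - 1) (q - 1)
    + F p (q + 2) + F p (q - 2) - 6 * F p q

lemma triangularLaplacian_const_mul (c : ℝ) (F : ℤ → ℤ → ℝ) (p q : ℤ) :
    triangularLaplacian (fun p q => c * F p q) p q = c * triangularLaplacian F p q := by
  unfold triangularLaplacian
  ring

lemma triangularLaplacian_div_const (F : ℤ → ℤ → ℝ) (c : ℝ) (p q : ℤ) :
    triangularLaplacian (fun p q => F p q / c) p q = triangularLaplacian F p q / c := by
  unfold triangularLaplacian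
  ring

lemma triangularLaplacian_one_sub_cos (x y : ℝ) (p q : ℤ) :
    triangularLaplacian (fun p q => 1 - cos (x * p + y * q)) p q =
      cos (x * p + y * q) * triangularSymbol x y := by
  unfold triangularLaplacian triangularSymbol
  push_cast
  rw [show x * (p + 1) + y * (q + 1) = x * p + y * q + (x + y) by ring,
    show x * (p + 1) + y * (q - 1) = x * p + y * q + (x - y) by ring,
    show x * (p - 1) + y * (q + 1) = x * p + y * q - (x - y) by ring,
    show x * (p - 1) + y * (q - 1) = x * p + y * q - (x + y) by ring,
    show x * p + y * (q + 2) = x * p + y * q + 2 * y by ring,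
    show x * p + y * (q - 2) = x * p + y * q - 2 * y by ring]
  simp only [cos_add, cos_sub, sin_add, sin_sub]
  ring

lemma triangularLaplacian_triangularIntegrand {x y : ℝ} (hD : triangularSymbol x y ≠ 0)
    (p q : ℤ) :
    triangularLaplacian (fun p q => triangularIntegrand p q x y) p q = cos (x * p + y * q) := by
  calc _ = triangularLaplacian (fun p q => 1 - cos (x * p + y * q)) p q / triangularSymbol x y :=
        triangularLaplacian_div_const _ _ p q
    _ = cos (x * p + y * q) := by
        rw [triangularLaplacian_one_sub_cos, mul_div_cancel_right₀ _ hD]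

lemma intervalIntegral_triangularLaplacian {μ : Measure ℝ} {a b : ℝ} {f : ℤ → ℤ → ℝ → ℝ}
    (hf : ∀ p q, Even (p + q) → IntervalIntegrable (f p q) μ a b) {p q : ℤ}
    (h : Even (p + q)) :
    ∫ x in a..b, triangularLaplacian (fun p q => f p q x) p q ∂μ =
      triangularLaplacian (fun p q => ∫ x in a..b, f p q x ∂μ) p q := by
  have hf' : ∀ dp dq : ℤ, Even (dp + dq) → IntervalIntegrable (f (p + dp) (q + dq)) μ a b :=
    fun dp dq hd => hf _ _ (by rw [add_add_add_comm]; exact h.add hd)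
  have h1 := hf' 1 1 (by decide)
  have h2 := hf' 1 (-1) (by decide)
  have h3 := hf' (-1) 1 (by decide)
  have h4 := hf' (-1) (-1) (by decide)
  have h5 := hf' 0 2 (by decide)
  have h6 := hf' 0 (-2) (by decide)
  simp only [← sub_eq_add_neg, add_zero] at h1 h2 h3 h4 h5 h6
  unfold triangularLaplacian
  rw [intervalIntegral.integral_sub (((((h1.add h2).add h3).add h4).add h5).add h6)
      ((hf p q h).const_mul 6),
    intervalIntegral.integral_add ((((h1.add h2).add h3).add h4).add h5) h6,
    intervalIntegral.integral_add (((h1.add h2).add h3).add h4) h5,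
    intervalIntegral.integral_add ((h1.add h2).add h3) h4,
    intervalIntegral.integral_add (h1.add h2) h3,
    intervalIntegral.integral_add h1 h2, intervalIntegral.integral_const_mul]

lemma triangularLaplacian_integral_triangularIntegrand {p q : ℤ} (h : Even (p + q)) :
    triangularLaplacian
        (fun p q => ∫ x in -π..π, ∫ y in -π..π, triangularIntegrand p q x y) p q =
      ∫ x in -π..π, ∫ y in -π..π, cos (x * p + y * q) := by
  rw [← intervalIntegral_triangularLaplacian
    (fun _ _ h' => intervalIntegrable_intervalIntegral_triangularIntegrand h' _ _ _ _) h]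
  refine intervalIntegral.integral_congr fun x _ => ?_
  rw [← intervalIntegral_triangularLaplacian
    (fun _ _ h' => intervalIntegrable_triangularIntegrand h' x _ _) h]
  refine intervalIntegral.integral_congr_ae ?_
  filter_upwards [ae_triangularSymbol_ne_zero x] with y hy _
  exact triangularLaplacian_triangularIntegrand hy p q

/-- The integral defining `triangularGreen` converges, vanishes at the origin, and
satisfies the discrete Poisson equation on the triangular lattice with a unit
point source at the origin. -/
theorem triangularGreen_solves_discrete_poisson :
    triangularGreen 0 0 = 0 ∧
    ∀ p q : ℤ, Even (p + q) →
      (IntegrableOn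
        (fun z : ℝ × ℝ =>
          (1 - Real.cos (z.1 * (p : ℝ) + z.2 * (q : ℝ))) /
            (6 - 4 * Real.cos z.1 * Real.cos z.2 - 2 * Real.cos (2 * z.2)))
        (Set.Icc (-Real.pi) Real.pi ×ˢ Set.Icc (-Real.pi) Real.pi)) ∧
      (triangularGreen (p + 1) (q + 1) + triangularGreen (p + 1) (q - 1)
        + triangularGreen (p - 1) (q + 1) + triangularGreen (p - 1) (q - 1)
        + triangularGreen p (q + 2) + triangularGreen p (q - 2)
        - 6 * triangularGreen p q
        = if p = 0 ∧ q = 0 then 1 else 0) := by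
  refine ⟨by simp [triangularGreen], fun p q h => ⟨?_, ?_⟩⟩
  · exact integrableOn_triangularIntegrand h (isCompact_Icc.prod isCompact_Icc).measure_ne_top
  · change triangularLaplacian (fun p q => 1 / (4 * π ^ 2) *
      ∫ x in -π..π, ∫ y in -π..π, triangularIntegrand p q x y) p q = _
    rw [triangularLaplacian_const_mul, triangularLaplacian_integral_triangularIntegrand h,
      integral_integral_cos_mul_int]
    split_ifs
    · field_simp
    · rw [mul_zero]
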